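/- arXiv:2405.06854 — 2 statements merged into one kernel-verified Lean document; each statement's English description precedes it below -/
import Mathlib

section
/- The no-trade set K_Γ := { z ∈ ℝⁿ : ∃ α ≥ 0, α Γ z ≤ ∇U(0) ≤ α z } is a convex set, where Γ is a diagonal matrix with diagonal entries γᵢ ∈ (0,1) and ∇U(0) ∈ ℝⁿ is fixed with ∇U(0) ≥ 0 (componentwise inequalities). -/
theorem noTradeSet_convex {n : ℕ} (γ g : Fin n → ℝ)
    (hγ : ∀ i, 0 < γ i ∧ γ i < 1) (hg : ∀ i, 0 ≤ g i) :
    Convex ℝ {z : Fin n → ℝ | ∃ α : ℝ, 0 ≤ α ∧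
      ∀ i, α * γ i * z i ≤ g i ∧ g i ≤ α * z i} := by
  rintro z ⟨α, hα, hz⟩ w ⟨β, hβ, hw⟩ t s ht hs hts
  simp only [Set.mem_setOf_eq, Pi.add_apply, Pi.smul_apply, smul_eq_mul]
  rcases eq_or_lt_of_le hα with h0 | hαpos
  · refine ⟨0, le_refl 0, fun i => ?_⟩
    have hgi : g i = 0 := le_antisymm (by have := (hz i).2; rw [← h0] at this; simpa using this) (hg i)
    simp [hgi]
  rcases eq_or_lt_of_le hβ with h0 | hβpos
  · refine ⟨0, le_refl 0, fun i => ?_⟩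
    have hgi : g i = 0 := le_antisymm (by have := (hw i).2; rw [← h0] at this; simpa using this) (hg i)
    simp [hgi]
  have hD : 0 < t * β + s * α := by
    rcases lt_or_eq_of_le ht with ht' | ht'
    · exact add_pos_of_pos_of_nonneg (mul_pos ht' hβpos) (mul_nonneg hs hαpos.le)
    · have hs' : s = 1 := by linarith
      exact add_pos_of_nonneg_of_pos (mul_nonneg ht hβpos.le) (by rw [hs']; simpa using hαpos)
  refine ⟨α * β / (t * β + s * α), div_nonneg (mul_nonneg hα hβ) hD.le, fun i => ?_⟩
  have h1 := (hz i).1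
  have h2 := (hz i).2
  have h3 := (hw i).1
  have h4 := (hw i).2
  have e1 := mul_le_mul_of_nonneg_left h1 (mul_nonneg ht hβpos.le)
  have e2 := mul_le_mul_of_nonneg_left h3 (mul_nonneg hs hαpos.le)
  have e3 := mul_le_mul_of_nonneg_left h2 (mul_nonneg ht hβpos.le)
  have e4 := mul_le_mul_of_nonneg_left h4 (mul_nonneg hs hαpos.le)
  constructor
  · rw [div_mul_eq_mul_div, div_mul_eq_mul_div, div_le_iff₀ hD]
    nlinarith [e1, e2]
  · rw [div_mul_eq_mul_div, le_div_iff₀ hD]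
    nlinarith [e3, e4]
end

section
/- Suppose φ : ℝⁿ₊ → ℝ is strictly increasing in each coordinate and U : ℝⁿ → ℝ is strongly increasing (x ≩ y implies U(x) > U(y)). If (x̄, ȳ) maximizes U(x-y) over the feasible set { φ(R+Γy-x)=φ(R), R+Γy-x ≥ 0, 0 ≤ x ≤ R, y ≥ 0 }, then the complementarity condition x̄ᵢ ȳᵢ = 0 holds for every i. -/
theorem optimal_trade_complementarity {n : ℕ}
    (R γ : Fin n → ℝ) (hR : ∀ i, 0 < R i) (hγ : ∀ i, 0 < γ i ∧ γ i < 1)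
    (φ : (Fin n → ℝ) → ℝ)
    (hφmono : ∀ z : Fin n → ℝ, (∀ i, 0 ≤ z i) → ∀ j : Fin n, ∀ t : ℝ, z j < t →
      φ z < φ (Function.update z j t))
    (U : (Fin n → ℝ) → ℝ)
    (hU : ∀ x y : Fin n → ℝ, (∀ i, y i ≤ x i) → x ≠ y → U y < U x)
    (xb yb : Fin n → ℝ)
    (hfeas : φ (fun i => R i + γ i * yb i - xb i) = φ R ∧
      (∀ i, 0 ≤ R i + γ i * yb i - xb i) ∧
      (∀ i, 0 ≤ xb i ∧ xb i ≤ R i) ∧ (∀ i, 0 ≤ yb i))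
    (hopt : ∀ x y : Fin n → ℝ,
      (φ (fun i => R i + γ i * y i - x i) = φ R ∧
        (∀ i, 0 ≤ R i + γ i * y i - x i) ∧
        (∀ i, 0 ≤ x i ∧ x i ≤ R i) ∧ (∀ i, 0 ≤ y i)) →
      U (x - y) ≤ U (xb - yb)) :
    ∀ i, xb i * yb i = 0 := by
  intro i
  by_contra h
  obtain ⟨h1, h2, h3, h4⟩ := hfeas
  obtain ⟨hγ0, hγ1⟩ := hγ i
  have hxi : 0 < xb i := lt_of_le_of_ne (h3 i).1 (fun e => h (by rw [← e]; ring))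
  have hyi : 0 < yb i := lt_of_le_of_ne (h4 i) (fun e => h (by rw [← e]; ring))
  set δ : ℝ := min (xb i) (γ i * yb i) with hδdef
  have hδ : 0 < δ := lt_min hxi (mul_pos hγ0 hyi)
  have hδx : δ ≤ xb i := min_le_left _ _
  have hδy : δ / γ i ≤ yb i := (div_le_iff₀' hγ0).mpr (min_le_right _ _)
  set x' : Fin n → ℝ := Function.update xb i (xb i - δ) with hx'
  set y' : Fin n → ℝ := Function.update yb i (yb i - δ / γ i) with hy'
  have hkey : (fun j => R j + γ j * y' j - x' j) = (fun j => R j + γ j * yb j - xb j) := by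
    funext j
    by_cases hj : j = i
    · subst hj
      simp only [hx', hy', Function.update_self]
      field_simp
      ring
    · simp [hx', hy', Function.update_of_ne hj]
  have hfeas' : φ (fun j => R j + γ j * y' j - x' j) = φ R ∧
      (∀ j, 0 ≤ R j + γ j * y' j - x' j) ∧
      (∀ j, 0 ≤ x' j ∧ x' j ≤ R j) ∧ (∀ j, 0 ≤ y' j) := by
    refine ⟨by rw [hkey]; exact h1, fun j => by
      have := congrFun hkey j; rw [this]; exact h2 j, fun j => ?_, fun j => ?_⟩
    · by_cases hj : j = i
      · subst hj
        simp only [hx', Function.update_self]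
        constructor
        · linarith
        · linarith [(h3 j).2]
      · simp only [hx', Function.update_of_ne hj]; exact h3 j
    · by_cases hj : j = i
      · subst hj
        simp only [hy', Function.update_self]
        linarith
      · simp only [hy', Function.update_of_ne hj]; exact h4 j
  have hle := hopt x' y' hfeas'
  have hδlt : δ < δ / γ i := by
    rw [lt_div_iff₀ hγ0]
    nlinarith
  have hlt : U (xb - yb) < U (x' - y') := by
    apply hU
    · intro j
      by_cases hj : j = i
      · subst hj
        simp only [Pi.sub_apply, hx', hy', Function.update_self]
        linarith
      · simp [hx', hy', Function.update_of_ne hj]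
    · intro heq
      have := congrFun heq i
      simp only [Pi.sub_apply, hx', hy', Function.update_self] at this
      linarith
  linarith
end
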